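/- (Lemma 5.) Let P and Q be probability measures on X × Y, let H be a hypothesis class whose loss L is bounded by C > 0, and let h* ∈ H minimize the expected error ε_Q over H. Then for every ĥ ∈ H: ε_P(h*) ≤ ε_P(ĥ) + 2√2 · C · (D_JS(P ‖ Q))^{1/2}. -/

import Mathlib

/-!
Let `M = (P + Q) / 2` and `φ = dP/dM`; then `dQ/dM = 2 - φ`, so `0 ≤ φ ≤ 2` and
`T = ∫ |φ - 1| dM` is the total variation distance. A loss `ℓ_h` with values in `[0, C]` has
`|ε_P(h) - ε_Q(h)| = |∫ 2 (φ - 1) ℓ_h dM| ≤ C T`, because `φ - 1` has mean zero. Writing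
`x = 1 + t`, the pointwise bound `t² ≤ klFun (1 + t) + klFun (1 - t)` for `|t| ≤ 1` holds since
the derivative of the difference is `log (1 + t) - log (1 - t) - 2 t ≥ 0`; so by Jensen
`T² ≤ ∫ (φ - 1)² dM ≤ D_KL(P ‖ M) + D_KL(Q ‖ M) = 2 D_JS(P ‖ Q)`. Finally
`ε_P(h*) ≤ ε_Q(h*) + C T ≤ ε_Q(ĥ) + C T ≤ ε_P(ĥ) + 2 C T`.
-/

open MeasureTheory
open scoped ENNReal

open Classical in
/-- Kullback–Leibler divergence `D_KL(P ‖ Q)`, valued in `ℝ≥0∞`: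
it is `∫ log (dP/dQ) dP` when `P ≪ Q` and the log-likelihood ratio is integrable,
and `∞` otherwise. -/
noncomputable def klDiv {α : Type*} [MeasurableSpace α] (P Q : Measure α) : ℝ≥0∞ :=
  if P ≪ Q ∧ Integrable (llr P Q) P then ENNReal.ofReal (∫ x, llr P Q x ∂P) else ⊤

/-- Jensen–Shannon divergence:
`D_JS(P ‖ Q) = (1/2) D_KL(P ‖ M) + (1/2) D_KL(Q ‖ M)` with `M = (1/2)(P + Q)`. -/
noncomputable def jsDiv {α : Type*} [MeasurableSpace α] (P Q : Measure α) : ℝ≥0∞ :=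
  2⁻¹ * klDiv P ((2 : ℝ≥0∞)⁻¹ • (P + Q)) + 2⁻¹ * klDiv Q ((2 : ℝ≥0∞)⁻¹ • (P + Q))

/-- Expected error `ε_P(h) = E_{(x,y)∼P}[L(h(x), y)]`. -/
noncomputable def expErr {X Y 𝓟 : Type*} [MeasurableSpace X] [MeasurableSpace Y]
    (L : 𝓟 → Y → ℝ) (P : Measure (X × Y)) (h : X → 𝓟) : ℝ :=
  ∫ z, L (h z.1) z.2 ∂P

open Real Set
open InformationTheory hiding klDiv

lemma two_mul_le_log_one_add_sub_log_one_sub {t : ℝ} (h0 : 0 ≤ t) (h1 : t < 1) :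
    2 * t ≤ log (1 + t) - log (1 - t) := by
  have hsum := hasSum_log_sub_log_of_abs_lt_one (by rwa [abs_of_nonneg h0])
  simpa using le_hasSum hsum 0 fun k _ => by positivity

lemma sq_le_klFun_one_add_add_klFun_one_sub {t : ℝ} (ht : |t| ≤ 1) :
    t ^ 2 ≤ klFun (1 + t) + klFun (1 - t) := by
  wlog h0 : 0 ≤ t generalizing t
  · have := this (t := -t) (by rwa [abs_neg]) (by linarith)
    rwa [neg_sq, ← sub_eq_add_neg, sub_neg_eq_add, add_comm (klFun _)] at this
  have hmono : MonotoneOn (fun s => klFun (1 + s) + klFun (1 - s) - s ^ 2) (Icc 0 1) := by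
    refine monotoneOn_of_hasDerivWithinAt_nonneg (f' := fun s => log (1 + s) - log (1 - s) - 2 * s)
      (convex_Icc 0 1) (by fun_prop) (fun s hs => ?_) (fun s hs => ?_)
    · rw [interior_Icc] at hs
      have h1 := (hasDerivAt_klFun (x := 1 + s) (by linarith [hs.1])).comp s
        ((hasDerivAt_id s).const_add 1)
      have h2 := (hasDerivAt_klFun (x := 1 - s) (by linarith [hs.2])).comp s
        ((hasDerivAt_id s).const_sub 1)
      exact ((h1.add h2).sub (hasDerivAt_pow 2 s)).hasDerivWithinAt.congr_deriv (by ring)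
    · rw [interior_Icc] at hs
      linarith [two_mul_le_log_one_add_sub_log_one_sub hs.1.le hs.2]
  have := hmono ⟨le_rfl, zero_le_one⟩ ⟨h0, (le_abs_self t).trans ht⟩ h0
  simpa [klFun_one] using this

/-- Mathlib's divergence carries the extra term `ν.real univ - μ.real univ`. -/
lemma klDiv_eq_informationTheory_klDiv {α : Type*} [MeasurableSpace α] {μ ν : Measure α}
    (h : μ univ = ν univ) : klDiv μ ν = InformationTheory.klDiv μ ν := by
  by_cases hc : μ ≪ ν ∧ Integrable (llr μ ν) μ
  · rw [klDiv, if_pos hc, InformationTheory.klDiv_of_ac_of_integrable hc.1 hc.2, measureReal_def,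
      measureReal_def, h, add_sub_cancel_right]
  · rw [klDiv, if_neg hc, eq_comm, InformationTheory.klDiv_eq_top_iff]
    exact fun h1 h2 => hc ⟨h1, h2⟩

lemma sq_integral_le_integral_sq {α : Type*} [MeasurableSpace α] {μ : Measure α}
    [IsProbabilityMeasure μ] {f : α → ℝ} (hf : MemLp f 2 μ) :
    (∫ x, f x ∂μ) ^ 2 ≤ ∫ x, f x ^ 2 ∂μ := by
  have := ProbabilityTheory.variance_nonneg f μ
  rw [ProbabilityTheory.variance_eq_sub hf] at this
  simpa using this

lemma Continuous.integrable_comp_of_ae_mem_Icc {α : Type*} [MeasurableSpace α] {μ : Measure α}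
    [IsFiniteMeasure μ] {g : ℝ → ℝ} (hg : Continuous g) {f : α → ℝ} (hf : Measurable f) {a b : ℝ}
    (hab : ∀ᵐ x ∂μ, f x ∈ Icc a b) : Integrable (fun x => g (f x)) μ := by
  obtain ⟨C, hC⟩ := isCompact_Icc.exists_bound_of_continuousOn hg.continuousOn
  exact .of_bound (hg.measurable.comp hf).aestronglyMeasurable C (hab.mono fun x hx => hC _ hx)

section Midpoint

variable {α : Type*} [MeasurableSpace α] (P Q : Measure α)

noncomputable def midMeasure : Measure α := (2 : ℝ≥0∞)⁻¹ • (P + Q)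

instance [IsFiniteMeasure P] [IsFiniteMeasure Q] : IsFiniteMeasure (midMeasure P Q) :=
  (P + Q).smul_finite (by simp)

instance [IsProbabilityMeasure P] [IsProbabilityMeasure Q] :
    IsProbabilityMeasure (midMeasure P Q) := by
  constructor
  rw [midMeasure, Measure.smul_apply, Measure.add_apply, measure_univ, measure_univ,
    one_add_one_eq_two, smul_eq_mul, ENNReal.inv_mul_cancel two_ne_zero ENNReal.ofNat_ne_top]

lemma midMeasure_comm : midMeasure Q P = midMeasure P Q := by
  rw [midMeasure, midMeasure, add_comm]

lemma absolutelyContinuous_midMeasure : P ≪ midMeasure P Q :=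
  (Measure.AbsolutelyContinuous.rfl.add_right Q).trans (Measure.absolutelyContinuous_smul (by simp))

noncomputable def midDensity (z : α) : ℝ := (P.rnDeriv (midMeasure P Q) z).toReal

lemma measurable_midDensity : Measurable (midDensity P Q) :=
  (Measure.measurable_rnDeriv _ _).ennreal_toReal

lemma integrable_midDensity [IsFiniteMeasure P] :
    Integrable (midDensity P Q) (midMeasure P Q) :=
  Measure.integrable_toReal_rnDeriv

lemma integral_midDensity_mul [IsFiniteMeasure P] [IsFiniteMeasure Q] (f : α → ℝ) :
    ∫ z, midDensity P Q z * f z ∂midMeasure P Q = ∫ z, f z ∂P :=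
  integral_rnDeriv_smul (absolutelyContinuous_midMeasure P Q)

lemma integrable_midDensity_mul [IsFiniteMeasure P] [IsFiniteMeasure Q] {f : α → ℝ}
    (hf : Integrable f P) :
    Integrable (fun z => midDensity P Q z * f z) (midMeasure P Q) :=
  (integrable_rnDeriv_smul_iff (absolutelyContinuous_midMeasure P Q)).mpr hf

lemma ae_midDensity_add_midDensity [IsFiniteMeasure P] [IsFiniteMeasure Q] :
    ∀ᵐ z ∂midMeasure P Q, midDensity P Q z + midDensity Q P z = 2 := by
  have hPQ : P + Q = (2 : ℝ≥0∞) • midMeasure P Q := by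
    rw [midMeasure, smul_smul, ENNReal.mul_inv_cancel two_ne_zero ENNReal.ofNat_ne_top, one_smul]
  filter_upwards [Measure.rnDeriv_add' P Q (midMeasure P Q),
    hPQ ▸ Measure.rnDeriv_smul_left_of_ne_top (midMeasure P Q) (midMeasure P Q)
      ENNReal.ofNat_ne_top,
    Measure.rnDeriv_self (midMeasure P Q), Measure.rnDeriv_lt_top P (midMeasure P Q),
    Measure.rnDeriv_lt_top Q (midMeasure P Q)] with z hadd hsmul hself hP hQ
  rw [midDensity, midDensity, midMeasure_comm P Q, ← ENNReal.toReal_add hP.ne hQ.ne,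
    ← Pi.add_apply, ← hadd, hsmul]
  simp [hself]

lemma ae_midDensity_mem_Icc [IsFiniteMeasure P] [IsFiniteMeasure Q] :
    ∀ᵐ z ∂midMeasure P Q, midDensity P Q z ∈ Icc 0 2 := by
  filter_upwards [ae_midDensity_add_midDensity P Q] with z hz
  have : 0 ≤ midDensity Q P z := ENNReal.toReal_nonneg
  exact ⟨ENNReal.toReal_nonneg, by linarith⟩

lemma integral_midDensity_sub_one [IsProbabilityMeasure P] [IsProbabilityMeasure Q] :
    ∫ z, (midDensity P Q z - 1) ∂midMeasure P Q = 0 := by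
  have h : ∫ z, midDensity P Q z ∂midMeasure P Q = 1 :=
    (Measure.integral_toReal_rnDeriv (absolutelyContinuous_midMeasure P Q)).trans (by simp)
  rw [integral_sub (integrable_midDensity P Q) (integrable_const 1), h]
  simp

/-- The total variation distance `sup_A |P A - Q A|`, written through the density of `P`
with respect to the midpoint `(P + Q) / 2`. -/
noncomputable def tvDist : ℝ := ∫ z, |midDensity P Q z - 1| ∂midMeasure P Q

lemma tvDist_comm [IsFiniteMeasure P] [IsFiniteMeasure Q] : tvDist Q P = tvDist P Q := by
  rw [tvDist, tvDist, midMeasure_comm P Q]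
  refine integral_congr_ae ?_
  filter_upwards [ae_midDensity_add_midDensity P Q] with z hz
  rw [show midDensity Q P z - 1 = -(midDensity P Q z - 1) by linarith, abs_neg]

lemma integral_sub_integral_le_mul_tvDist [IsProbabilityMeasure P] [IsProbabilityMeasure Q]
    {k : α → ℝ} {C : ℝ} (hk : Measurable k) (hk0 : ∀ z, 0 ≤ k z) (hkC : ∀ z, k z ≤ C) :
    ∫ z, k z ∂P - ∫ z, k z ∂Q ≤ C * tvDist P Q := by
  have hbound {μ : Measure α} [IsFiniteMeasure μ] : Integrable k μ :=
    .of_bound hk.aestronglyMeasurable C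
      (ae_of_all _ fun z => by rw [Real.norm_of_nonneg (hk0 z)]; exact hkC z)
  have hφ1 : Integrable (fun z => midDensity P Q z - 1) (midMeasure P Q) :=
    (integrable_midDensity P Q).sub (integrable_const 1)
  rw [← integral_midDensity_mul P Q k, ← integral_midDensity_mul Q P k, midMeasure_comm P Q,
    ← integral_sub (integrable_midDensity_mul P Q hbound)
      (midMeasure_comm P Q ▸ integrable_midDensity_mul Q P hbound)]
  -- `(φ_P - φ_Q) k = 2 (φ_P - 1) k`, and `φ_P - 1` has mean zero
  calc ∫ z, (midDensity P Q z * k z - midDensity Q P z * k z) ∂midMeasure P Q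
      ≤ ∫ z, C * (|midDensity P Q z - 1| + (midDensity P Q z - 1)) ∂midMeasure P Q := by
        refine integral_mono_ae ((integrable_midDensity_mul P Q hbound).sub
          (midMeasure_comm P Q ▸ integrable_midDensity_mul Q P hbound))
          ((hφ1.abs.add hφ1).const_mul C) ?_
        filter_upwards [ae_midDensity_add_midDensity P Q] with z hz
        have hQ : midDensity Q P z = 2 - midDensity P Q z := by linarith
        rcases le_total 1 (midDensity P Q z) with h1 | h1
        · rw [hQ, abs_of_nonneg (by linarith)]
          nlinarith [hk0 z, hkC z]
        · rw [hQ, abs_of_nonpos (by linarith)]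
          nlinarith [hk0 z, hkC z]
    _ = C * tvDist P Q := by
        rw [integral_const_mul, integral_add hφ1.abs hφ1, integral_midDensity_sub_one, add_zero,
          tvDist]

lemma abs_integral_sub_integral_le_mul_tvDist [IsProbabilityMeasure P] [IsProbabilityMeasure Q]
    {k : α → ℝ} {C : ℝ} (hk : Measurable k) (hk0 : ∀ z, 0 ≤ k z) (hkC : ∀ z, k z ≤ C) :
    |∫ z, k z ∂P - ∫ z, k z ∂Q| ≤ C * tvDist P Q := by
  refine abs_sub_le_iff.mpr ⟨integral_sub_integral_le_mul_tvDist P Q hk hk0 hkC, ?_⟩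
  exact tvDist_comm P Q ▸ integral_sub_integral_le_mul_tvDist Q P hk hk0 hkC

end Midpoint

section JensenShannon

variable {α : Type*} [MeasurableSpace α] (P Q : Measure α) [IsProbabilityMeasure P]
  [IsProbabilityMeasure Q]

lemma integrable_klFun_midDensity :
    Integrable (fun z => klFun (midDensity P Q z)) (midMeasure P Q) :=
  continuous_klFun.integrable_comp_of_ae_mem_Icc (measurable_midDensity P Q)
    (ae_midDensity_mem_Icc P Q)

lemma toReal_klDiv_midMeasure :
    (klDiv P (midMeasure P Q)).toReal = ∫ z, klFun (midDensity P Q z) ∂midMeasure P Q := by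
  rw [klDiv_eq_informationTheory_klDiv (by simp)]
  exact toReal_klDiv_eq_integral_klFun (absolutelyContinuous_midMeasure P Q)

lemma klDiv_midMeasure_ne_top : klDiv P (midMeasure P Q) ≠ ∞ := by
  rw [klDiv_eq_informationTheory_klDiv (by simp)]
  exact klDiv_ne_top (absolutelyContinuous_midMeasure P Q)
    ((integrable_klFun_rnDeriv_iff (absolutelyContinuous_midMeasure P Q)).mp
      (integrable_klFun_midDensity P Q))

lemma two_mul_toReal_jsDiv :
    2 * (jsDiv P Q).toReal = ∫ z, klFun (midDensity P Q z) ∂midMeasure P Q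
      + ∫ z, klFun (midDensity Q P z) ∂midMeasure P Q := by
  have hQ := midMeasure_comm P Q ▸ klDiv_midMeasure_ne_top Q P
  change 2 * (2⁻¹ * klDiv P (midMeasure P Q) + 2⁻¹ * klDiv Q (midMeasure P Q)).toReal = _
  rw [ENNReal.toReal_add (by finiteness [klDiv_midMeasure_ne_top P Q]) (by finiteness [hQ]),
    ENNReal.toReal_mul, ENNReal.toReal_mul, toReal_klDiv_midMeasure,
    ← midMeasure_comm P Q, toReal_klDiv_midMeasure, midMeasure_comm P Q, ENNReal.toReal_inv,
    ENNReal.toReal_ofNat]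
  ring

lemma tvDist_sq_le_two_mul_toReal_jsDiv : tvDist P Q ^ 2 ≤ 2 * (jsDiv P Q).toReal := by
  have hφ := measurable_midDensity P Q
  calc tvDist P Q ^ 2
      ≤ ∫ z, |midDensity P Q z - 1| ^ 2 ∂midMeasure P Q :=
        sq_integral_le_integral_sq (.of_bound (by fun_prop) 1 (by
          filter_upwards [ae_midDensity_mem_Icc P Q] with z hz
          rw [Real.norm_eq_abs, abs_abs, abs_le]
          constructor <;> linarith [hz.1, hz.2]))
    _ ≤ ∫ z, (klFun (midDensity P Q z) + klFun (midDensity Q P z)) ∂midMeasure P Q := by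
        refine integral_mono_ae ?_ ((integrable_klFun_midDensity P Q).add ?_) ?_
        · exact (continuous_abs.pow 2).integrable_comp_of_ae_mem_Icc (hφ.sub measurable_const)
            ((ae_midDensity_mem_Icc P Q).mono fun z hz =>
              show _ ∈ Icc (-1) 1 from ⟨by linarith [hz.1], by linarith [hz.2]⟩)
        · exact midMeasure_comm P Q ▸ integrable_klFun_midDensity Q P
        filter_upwards [ae_midDensity_add_midDensity P Q, ae_midDensity_mem_Icc P Q] with z hz hI
        have := sq_le_klFun_one_add_add_klFun_one_sub (t := midDensity P Q z - 1)
          (abs_le.mpr ⟨by linarith [hI.1], by linarith [hI.2]⟩)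
        rw [sq_abs]
        rwa [add_sub_cancel, show 1 - (midDensity P Q z - 1) = midDensity Q P z by linarith]
          at this
    _ = 2 * (jsDiv P Q).toReal := by
        rw [integral_add (integrable_klFun_midDensity P Q)
          (midMeasure_comm P Q ▸ integrable_klFun_midDensity Q P), two_mul_toReal_jsDiv]

lemma tvDist_le_sqrt_two_mul_sqrt_toReal_jsDiv :
    tvDist P Q ≤ √2 * √(jsDiv P Q).toReal := by
  rw [← Real.sqrt_mul zero_le_two]
  exact Real.le_sqrt_of_sq_le (tvDist_sq_le_two_mul_toReal_jsDiv P Q)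

end JensenShannon

/-- **Lemma 5.** If `hstar ∈ H` minimizes the expected error `ε_Q` over `H`,
then for every `hhat ∈ H`:
`ε_P(hstar) ≤ ε_P(hhat) + 2√2 · C · (D_JS(P ‖ Q))^{1/2}`. -/
theorem expErr_min_le_expErr_add_jsDiv_bound
    {X Y 𝓟 : Type*} [MeasurableSpace X] [MeasurableSpace Y]
    (P Q : Measure (X × Y)) [IsProbabilityMeasure P] [IsProbabilityMeasure Q]
    (H : Set (X → 𝓟)) (L : 𝓟 → Y → ℝ) (C : ℝ) (hC : 0 < C)
    (hmeas : ∀ h ∈ H, Measurable fun z : X × Y => L (h z.1) z.2)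
    (hL0 : ∀ p y, 0 ≤ L p y) (hLC : ∀ p y, L p y ≤ C)
    (hstar : X → 𝓟) (hstarH : hstar ∈ H)
    (hstarMin : ∀ h ∈ H, expErr L Q hstar ≤ expErr L Q h)
    (hhat : X → 𝓟) (hhatH : hhat ∈ H) :
    expErr L P hstar ≤ expErr L P hhat
      + 2 * Real.sqrt 2 * C * Real.sqrt (jsDiv P Q).toReal := by
  have hgap : ∀ h ∈ H, |expErr L P h - expErr L Q h| ≤ C * tvDist P Q := fun h hh =>
    abs_integral_sub_integral_le_mul_tvDist P Q (hmeas h hh) (fun _ => hL0 _ _) (fun _ => hLC _ _)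
  have hstarGap := (abs_le.mp (hgap hstar hstarH)).2
  have hhatGap := (abs_le.mp (hgap hhat hhatH)).1
  have hTV := mul_le_mul_of_nonneg_left (tvDist_le_sqrt_two_mul_sqrt_toReal_jsDiv P Q) hC.le
  linarith [hstarMin hhat hhatH]
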